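/- arXiv:math/0609189 — 7 statements merged into one kernel-verified Lean document; each statement's English description precedes it below -/
import Mathlib

section
/- Let α, β, γ be distinct positive reals, n₀ ∈ ℝ³ a unit vector, k ∈ ℝ³ nonzero, and define the linear map L(n̂) = ω²n̂ − α(k·n̂)k + β(n₀·(k×n̂))(k×n₀) + γ k×((n₀×(k×n̂))×n₀). If there exist n̂ ∈ ℝ³ with n̂ ≠ 0, n₀·n̂ = 0, and λ ∈ ℝ such that L(n̂) = λn₀, then ω² = α(|k|² − (k·n₀)²) + γ(k·n₀)² or ω² = β(|k|² − (k·n₀)²) + γ(k·n₀)². -/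
open Matrix

set_option maxHeartbeats 2000000 in
/-- Linearized dispersion relation for orientation waves: if the linearized
operator `L` has a nontrivial kernel element orthogonal to `n₀` (modulo the
Lagrange multiplier direction `n₀`), then `ω²` lies on one of the two branches
(splay or twist) of the characteristic variety. -/
theorem dispersion_relation
    (α β γ ω : ℝ) (hα : 0 < α) (hβ : 0 < β) (hγ : 0 < γ)
    (hαβ : α ≠ β) (hβγ : β ≠ γ) (hαγ : α ≠ γ)
    (n₀ k : Fin 3 → ℝ) (hn₀ : n₀ ⬝ᵥ n₀ = 1) (hk : k ≠ 0)
    (L : (Fin 3 → ℝ) → (Fin 3 → ℝ))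
    (hL : ∀ m : Fin 3 → ℝ,
      L m = ω ^ 2 • m - (α * (k ⬝ᵥ m)) • k
            + (β * (n₀ ⬝ᵥ (k ⨯₃ m))) • (k ⨯₃ n₀)
            + γ • (k ⨯₃ ((n₀ ⨯₃ (k ⨯₃ m)) ⨯₃ n₀)))
    (h : ∃ (m : Fin 3 → ℝ) (l : ℝ), m ≠ 0 ∧ n₀ ⬝ᵥ m = 0 ∧ L m = l • n₀) :
    ω ^ 2 = α * (k ⬝ᵥ k - (k ⬝ᵥ n₀) ^ 2) + γ * (k ⬝ᵥ n₀) ^ 2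
    ∨ ω ^ 2 = β * (k ⬝ᵥ k - (k ⬝ᵥ n₀) ^ 2) + γ * (k ⬝ᵥ n₀) ^ 2 := by
  obtain ⟨m, l, hm, hm0, heq⟩ := h
  rw [hL] at heq
  have h0 := congrFun heq 0
  have h1 := congrFun heq 1
  have h2 := congrFun heq 2
  simp only [Pi.add_apply, Pi.sub_apply, Pi.smul_apply, smul_eq_mul, cross_apply,
    cons_val_zero, cons_val_one, head_cons, cons_val_two, tail_cons,
    dotProduct, Fin.sum_univ_three] at h0 h1 h2
  have hm0' : n₀ 0 * m 0 + n₀ 1 * m 1 + n₀ 2 * m 2 = 0 := by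
    simpa [dotProduct, Fin.sum_univ_three] using hm0
  have hn₀' : n₀ 0 * n₀ 0 + n₀ 1 * n₀ 1 + n₀ 2 * n₀ 2 = 1 := by
    simpa [dotProduct, Fin.sum_univ_three] using hn₀
  have hMne : m ⬝ᵥ m ≠ 0 := fun hz => hm (dotProduct_self_eq_zero.mp hz)
  have hM : 0 < m ⬝ᵥ m := by
    have hnn : 0 ≤ m ⬝ᵥ m := by
      simp only [dotProduct, Fin.sum_univ_three]
      nlinarith [mul_self_nonneg (m 0), mul_self_nonneg (m 1), mul_self_nonneg (m 2)]
    exact hnn.lt_of_ne (Ne.symm hMne)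
  have e1 : (ω ^ 2 - α * (k ⬝ᵥ k - (k ⬝ᵥ n₀) ^ 2) - γ * (k ⬝ᵥ n₀) ^ 2) * (k ⬝ᵥ m) = 0 := by
    simp only [dotProduct, Fin.sum_univ_three]
    linear_combination (k 0 - (k 0 * n₀ 0 + k 1 * n₀ 1 + k 2 * n₀ 2) * n₀ 0) * h0 + (k 1 - (k 0 * n₀ 0 + k 1 * n₀ 1 + k 2 * n₀ 2) * n₀ 1) * h1 + (k 2 - (k 0 * n₀ 0 + k 1 * n₀ 1 + k 2 * n₀ 2) * n₀ 2) * h2 + (ω ^ 2 * (k 0 * n₀ 0 + k 1 * n₀ 1 + k 2 * n₀ 2) - γ * (k 0 * n₀ 0 + k 1 * n₀ 1 + k 2 * n₀ 2) * (n₀ 0 * n₀ 0 + n₀ 1 * n₀ 1 + n₀ 2 * n₀ 2) * (k 0 * k 0 + k 1 * k 1 + k 2 * k 2)) * hm0' + (γ * (k 0 * n₀ 0 + k 1 * n₀ 1 + k 2 * n₀ 2) ^ 2 * (k 0 * m 0 + k 1 * m 1 + k 2 * m 2) - l * (k 0 * n₀ 0 + k 1 * n₀ 1 + k 2 * n₀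 2)) * hn₀'
  have e2 : (ω ^ 2 - β * (k ⬝ᵥ k - (k ⬝ᵥ n₀) ^ 2) - γ * (k ⬝ᵥ n₀) ^ 2) * ((n₀ ⨯₃ k) ⬝ᵥ m) = 0 := by
    simp only [cross_apply, cons_val_zero, cons_val_one, head_cons, cons_val_two, tail_cons,
      dotProduct, Fin.sum_univ_three]
    linear_combination (n₀ 1 * k 2 - n₀ 2 * k 1) * h0 + (n₀ 2 * k 0 - n₀ 0 * k 2) * h1 + (n₀ 0 * k 1 - n₀ 1 * k 0) * h2 + (β * ((n₀ 1 * k 2 - n₀ 2 * k 1) * m 0 + (n₀ 2 * k 0 - n₀ 0 * k 2) * m 1 + (n₀ 0 * k 1 - n₀ 1 * k 0) * m 2) * (k 0 * k 0 + k 1 * k 1 + k 2 * k 2)) * hn₀'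
  have e3 : (ω ^ 2 - γ * (k ⬝ᵥ n₀) ^ 2) * (m ⬝ᵥ m)
      = α * (k ⬝ᵥ m) ^ 2 + β * ((n₀ ⨯₃ k) ⬝ᵥ m) ^ 2 := by
    simp only [cross_apply, cons_val_zero, cons_val_one, head_cons, cons_val_two, tail_cons,
      dotProduct, Fin.sum_univ_three]
    linear_combination m 0 * h0 + m 1 * h1 + m 2 * h2 + (l - 2 * γ * (k 0 * n₀ 0 + k 1 * n₀ 1 + k 2 * n₀ 2) * (k 0 * m 0 + k 1 * m 1 + k 2 * m 2) + γ * (k 0 * k 0 + k 1 * k 1 + k 2 * k 2) * (n₀ 0 * m 0 + n₀ 1 * m 1 + n₀ 2 * m 2)) * hm0'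
  have e4 : (k ⬝ᵥ m) ^ 2 + ((n₀ ⨯₃ k) ⬝ᵥ m) ^ 2 = (k ⬝ᵥ k - (k ⬝ᵥ n₀) ^ 2) * (m ⬝ᵥ m) := by
    simp only [cross_apply, cons_val_zero, cons_val_one, head_cons, cons_val_two, tail_cons,
      dotProduct, Fin.sum_univ_three]
    linear_combination ((m 0 * m 0 + m 1 * m 1 + m 2 * m 2) * (k 0 * k 0 + k 1 * k 1 + k 2 * k 2) - (k 0 * m 0 + k 1 * m 1 + k 2 * m 2) ^ 2) * hn₀' + (2 * (k 0 * n₀ 0 + k 1 * n₀ 1 + k 2 * n₀ 2) * (k 0 * m 0 + k 1 * m 1 + k 2 * m 2) - (k 0 * k 0 + k 1 * k 1 + k 2 * k 2) * (n₀ 0 * m 0 + n₀ 1 * m 1 + n₀ 2 * m 2)) * hm0'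
  rcases mul_eq_zero.mp e1 with hc1 | ha
  · exact Or.inl (by linarith)
  rcases mul_eq_zero.mp e2 with hc2 | hb
  · exact Or.inr (by linarith)
  have hKs : k ⬝ᵥ k - (k ⬝ᵥ n₀) ^ 2 = 0 := by
    have : (k ⬝ᵥ k - (k ⬝ᵥ n₀) ^ 2) * (m ⬝ᵥ m) = 0 := by rw [← e4, ha, hb]; ring
    exact (mul_eq_zero.mp this).resolve_right hMne
  have hω : ω ^ 2 = γ * (k ⬝ᵥ n₀) ^ 2 := by
    have h5 : (ω ^ 2 - γ * (k ⬝ᵥ n₀) ^ 2) * (m ⬝ᵥ m) = 0 := by rw [e3, ha, hb]; ring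
    have := (mul_eq_zero.mp h5).resolve_right hMne
    linarith
  exact Or.inl (by rw [hKs]; linarith)
end

section
/- Let n₀, k ∈ ℝ³ with n₀ a unit vector, α, γ > 0, a(k;n) = √(α(|k|²−(k·n)²) + γ(k·n)²), and suppose a(k;n₀) > 0. Then the derivative of t ↦ a(k; n₀+tR)² at t = 0, where R = k − (k·n₀)n₀, equals −2(α−γ)(k·n₀)(|k|² − (k·n₀)²). In particular, if α ≠ γ and k is neither parallel nor orthogonal to n₀, this derivative is nonzero. -/
open Matrix

/-- Genuine nonlinearity of splay waves: the derivative of the squared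
splay-wave speed `a²(k; n₀ + tR)` at `t = 0`, in the direction of the splay
polarization vector `R = k − (k·n₀)n₀`, equals
`−2(α−γ)(k·n₀)(|k|² − (k·n₀)²)`; in particular it is nonzero when `α ≠ γ`
and `k` is neither parallel nor orthogonal to `n₀`. -/
theorem splay_genuinely_nonlinear
    (n₀ k : Fin 3 → ℝ) (hn₀ : n₀ ⬝ᵥ n₀ = 1)
    (α γ : ℝ) (hα : 0 < α) (hγ : 0 < γ)
    (ha : 0 < Real.sqrt (α * (k ⬝ᵥ k - (k ⬝ᵥ n₀) ^ 2) + γ * (k ⬝ᵥ n₀) ^ 2)) :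
    deriv (fun t : ℝ =>
        α * (k ⬝ᵥ k - (k ⬝ᵥ (n₀ + t • (k - (k ⬝ᵥ n₀) • n₀))) ^ 2)
          + γ * (k ⬝ᵥ (n₀ + t • (k - (k ⬝ᵥ n₀) • n₀))) ^ 2) 0
      = -2 * (α - γ) * (k ⬝ᵥ n₀) * (k ⬝ᵥ k - (k ⬝ᵥ n₀) ^ 2)
    ∧ (α ≠ γ → (¬ ∃ c : ℝ, k = c • n₀) → k ⬝ᵥ n₀ ≠ 0 →
        deriv (fun t : ℝ =>
          α * (k ⬝ᵥ k - (k ⬝ᵥ (n₀ + t • (k - (k ⬝ᵥ n₀) • n₀))) ^ 2)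
            + γ * (k ⬝ᵥ (n₀ + t • (k - (k ⬝ᵥ n₀) • n₀))) ^ 2) 0 ≠ 0) := by
  set A : ℝ := k ⬝ᵥ n₀ with hA
  set B : ℝ := k ⬝ᵥ k - A ^ 2 with hB
  have key : ∀ t : ℝ, k ⬝ᵥ (n₀ + t • (k - A • n₀)) = A + t * B := by
    intro t
    simp only [dotProduct_add, dotProduct_smul, dotProduct_sub, smul_eq_mul, ← hA]
    rw [hB]; ring
  have hfun : (fun t : ℝ =>
      α * (k ⬝ᵥ k - (k ⬝ᵥ (n₀ + t • (k - A • n₀))) ^ 2)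
        + γ * (k ⬝ᵥ (n₀ + t • (k - A • n₀))) ^ 2)
      = fun t : ℝ => α * (k ⬝ᵥ k - (A + t * B) ^ 2) + γ * (A + t * B) ^ 2 := by
    funext t; rw [key t]
  have hlin : HasDerivAt (fun t : ℝ => A + t * B) B 0 := by
    simpa using ((hasDerivAt_id (0:ℝ)).mul_const B).const_add A
  have hsq : HasDerivAt (fun t : ℝ => (A + t * B) ^ 2) (2 * A * B) 0 := by
    have := hlin.fun_pow 2
    simpa using this
  have hd : HasDerivAt (fun t : ℝ => α * (k ⬝ᵥ k - (A + t * B) ^ 2)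
      + γ * (A + t * B) ^ 2) (α * (-(2 * A * B)) + γ * (2 * A * B)) 0 := by
    exact ((hsq.const_sub (k ⬝ᵥ k)).const_mul α).add (hsq.const_mul γ)
  have hderiv : deriv (fun t : ℝ =>
      α * (k ⬝ᵥ k - (k ⬝ᵥ (n₀ + t • (k - A • n₀))) ^ 2)
        + γ * (k ⬝ᵥ (n₀ + t • (k - A • n₀))) ^ 2) 0
      = -2 * (α - γ) * A * B := by
    rw [hfun, hd.deriv]; ring
  refine ⟨hderiv, fun hαγ hpar hA0 => ?_⟩
  rw [hderiv]
  have hBne : B ≠ 0 := by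
    intro h0
    apply hpar
    refine ⟨A, ?_⟩
    have hz : (k - A • n₀) ⬝ᵥ (k - A • n₀) = 0 := by
      simp only [dotProduct_sub, sub_dotProduct, dotProduct_smul, smul_dotProduct,
        dotProduct_comm n₀ k, hn₀, smul_eq_mul, ← hA]
      rw [hB] at h0
      linear_combination h0
    have := (dotProduct_self_eq_zero (v := k - A • n₀)).mp hz
    have : k = A • n₀ := by
      have h := sub_eq_zero.mp this
      exact h
    exact this
  have : α - γ ≠ 0 := sub_ne_zero.mpr hαγ
  intro h
  have := mul_ne_zero (mul_ne_zero (mul_ne_zero (by norm_num : (-2:ℝ) ≠ 0) ‹α - γ ≠ 0›) hA0) hBne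
  exact this h
end

section
/- Suppose u, v : ℝ × ℝ → ℝ are smooth functions satisfying (v_t + u v_x)_x = 0 and u_xx = v_x². Then u satisfies ((u_t + u u_x)_x − (1/2)u_x²)_x = 0, i.e., m_t + m u_x + (m u)_x = 0 where m = u_xx. -/
/-- Partial derivative in the first (spatial) variable. -/
noncomputable def pdx (f : ℝ → ℝ → ℝ) : ℝ → ℝ → ℝ :=
  fun x t => deriv (fun x' => f x' t) x

/-- Partial derivative in the second (time) variable. -/
noncomputable def pdt (f : ℝ → ℝ → ℝ) : ℝ → ℝ → ℝ :=
  fun x t => deriv (fun t' => f x t') t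

lemma hasDerivAt_slice_x (f : ℝ → ℝ → ℝ) (hf : ContDiff ℝ (⊤ : ℕ∞) ↿f) (x t : ℝ) :
    HasDerivAt (fun x' => f x' t) (fderiv ℝ (↿f) (x, t) (1, 0)) x := by
  have h1 : HasFDerivAt (↿f) (fderiv ℝ (↿f) (x, t)) (x, t) :=
    (hf.differentiable (by simp) (x, t)).hasFDerivAt
  have h2 : HasDerivAt (fun x' : ℝ => (x', t)) ((1 : ℝ), (0 : ℝ)) x :=
    HasDerivAt.prodMk (hasDerivAt_id x) (hasDerivAt_const x t)
  exact h1.comp_hasDerivAt x h2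

lemma hasDerivAt_slice_t (f : ℝ → ℝ → ℝ) (hf : ContDiff ℝ (⊤ : ℕ∞) ↿f) (x t : ℝ) :
    HasDerivAt (fun t' => f x t') (fderiv ℝ (↿f) (x, t) (0, 1)) t := by
  have h1 : HasFDerivAt (↿f) (fderiv ℝ (↿f) (x, t)) (x, t) :=
    (hf.differentiable (by simp) (x, t)).hasFDerivAt
  have h2 : HasDerivAt (fun t' : ℝ => (x, t')) ((0 : ℝ), (1 : ℝ)) t :=
    HasDerivAt.prodMk (hasDerivAt_const t x) (hasDerivAt_id t)
  exact h1.comp_hasDerivAt t h2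

lemma hasDerivAt_pdx (f : ℝ → ℝ → ℝ) (hf : ContDiff ℝ (⊤ : ℕ∞) ↿f) (x t : ℝ) :
    HasDerivAt (fun x' => f x' t) (pdx f x t) x :=
  (hasDerivAt_slice_x f hf x t).differentiableAt.hasDerivAt

lemma hasDerivAt_pdt (f : ℝ → ℝ → ℝ) (hf : ContDiff ℝ (⊤ : ℕ∞) ↿f) (x t : ℝ) :
    HasDerivAt (fun t' => f x t') (pdt f x t) t :=
  (hasDerivAt_slice_t f hf x t).differentiableAt.hasDerivAt

lemma uncurry_pdx_eq (f : ℝ → ℝ → ℝ) (hf : ContDiff ℝ (⊤ : ℕ∞) ↿f) :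
    ↿(pdx f) = fun p : ℝ × ℝ => fderiv ℝ (↿f) p (1, 0) := by
  funext p
  obtain ⟨x, t⟩ := p
  exact (hasDerivAt_slice_x f hf x t).deriv

lemma uncurry_pdt_eq (f : ℝ → ℝ → ℝ) (hf : ContDiff ℝ (⊤ : ℕ∞) ↿f) :
    ↿(pdt f) = fun p : ℝ × ℝ => fderiv ℝ (↿f) p (0, 1) := by
  funext p
  obtain ⟨x, t⟩ := p
  exact (hasDerivAt_slice_t f hf x t).deriv

lemma contDiff_pdx (f : ℝ → ℝ → ℝ) (hf : ContDiff ℝ (⊤ : ℕ∞) ↿f) :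
    ContDiff ℝ (⊤ : ℕ∞) ↿(pdx f) := by
  rw [uncurry_pdx_eq f hf]
  exact (hf.fderiv_right (by simp)).clm_apply contDiff_const

lemma contDiff_pdt (f : ℝ → ℝ → ℝ) (hf : ContDiff ℝ (⊤ : ℕ∞) ↿f) :
    ContDiff ℝ (⊤ : ℕ∞) ↿(pdt f) := by
  rw [uncurry_pdt_eq f hf]
  exact (hf.fderiv_right (by simp)).clm_apply contDiff_const

lemma clairaut (f : ℝ → ℝ → ℝ) (hf : ContDiff ℝ (⊤ : ℕ∞) ↿f) (x t : ℝ) :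
    pdt (pdx f) x t = pdx (pdt f) x t := by
  have hF' : ContDiff ℝ (⊤ : ℕ∞) (fderiv ℝ (↿f)) := hf.fderiv_right (by simp)
  have hdiff : ∀ p : ℝ × ℝ, DifferentiableAt ℝ (fderiv ℝ (↿f)) p :=
    fun p => (hF'.differentiable (by simp) p)
  -- compute pdt (pdx f) x t
  have e1 : pdt (pdx f) x t = (fderiv ℝ (fderiv ℝ (↿f)) (x, t) (0, 1)) (1, 0) := by
    have h := hasDerivAt_slice_t (pdx f) (contDiff_pdx f hf) x t
    have : pdt (pdx f) x t = fderiv ℝ (↿(pdx f)) (x, t) (0, 1) := h.deriv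
    rw [this, uncurry_pdx_eq f hf,
      fderiv_clm_apply (hdiff (x, t)) (differentiableAt_const _)]
    simp
  have e2 : pdx (pdt f) x t = (fderiv ℝ (fderiv ℝ (↿f)) (x, t) (1, 0)) (0, 1) := by
    have h := hasDerivAt_slice_x (pdt f) (contDiff_pdt f hf) x t
    have : pdx (pdt f) x t = fderiv ℝ (↿(pdt f)) (x, t) (1, 0) := h.deriv
    rw [this, uncurry_pdt_eq f hf,
      fderiv_clm_apply (hdiff (x, t)) (differentiableAt_const _)]
    simp
  rw [e1, e2]
  exact second_derivative_symmetric
    (fun p => (hf.differentiable (by simp) p).hasFDerivAt)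
    (hdiff (x, t)).hasFDerivAt _ _

/-- If smooth `u, v` satisfy `(v_t + u v_x)_x = 0` and `u_xx = v_x²`, then `u`
satisfies the differentiated Hunter–Saxton equation, in the form
`m_t + m u_x + (m u)_x = 0` with `m = u_xx`. -/
theorem hunter_saxton_from_twist_system
    (u v : ℝ → ℝ → ℝ)
    (hu : ContDiff ℝ (⊤ : ℕ∞) ↿u) (hv : ContDiff ℝ (⊤ : ℕ∞) ↿v)
    (h1 : ∀ x t, pdx (fun x' t' => pdt v x' t' + u x' t' * pdx v x' t') x t = 0)
    (h2 : ∀ x t, pdx (pdx u) x t = (pdx v x t) ^ 2) :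
    ∀ x t, pdt (pdx (pdx u)) x t + pdx (pdx u) x t * pdx u x t
        + pdx (fun x' t' => pdx (pdx u) x' t' * u x' t') x t = 0 := by
  intro x t
  have hvx : ContDiff ℝ (⊤ : ℕ∞) ↿(pdx v) := contDiff_pdx v hv
  have hvt : ContDiff ℝ (⊤ : ℕ∞) ↿(pdt v) := contDiff_pdt v hv
  set a := pdx v x t with ha
  set b := pdx (pdx v) x t with hb
  set c := pdx u x t with hc
  set d := u x t with hd
  set e := pdt (pdx v) x t with he
  -- expand h1
  have H1 : pdx (pdt v) x t + (c * a + d * b) = 0 := by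
    have hder : HasDerivAt (fun x' => pdt v x' t + u x' t * pdx v x' t)
        (pdx (pdt v) x t + (c * a + d * b)) x :=
      (hasDerivAt_pdx (pdt v) hvt x t).add
        ((hasDerivAt_pdx u hu x t).mul (hasDerivAt_pdx (pdx v) hvx x t))
    have := hder.deriv
    rw [← this]
    exact h1 x t
  -- Clairaut for v
  have HC : e = pdx (pdt v) x t := clairaut v hv x t
  -- time derivative of u_xx via h2
  have E1 : pdt (pdx (pdx u)) x t = 2 * a * e := by
    have hfun : (fun t' => pdx (pdx u) x t') = fun t' => (pdx v x t') ^ 2 :=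
      funext fun t' => h2 x t'
    have hder : HasDerivAt (fun t' => (pdx v x t') ^ 2)
        ((2 : ℕ) * (pdx v x t) ^ 1 * e) t :=
      (hasDerivAt_pdt (pdx v) hvx x t).pow 2
    have : pdt (pdx (pdx u)) x t = deriv (fun t' => (pdx v x t') ^ 2) t := by
      simp only [pdt, hfun]
    rw [this, hder.deriv]
    push_cast
    ring
  -- spatial derivative of m * u via h2
  have E2 : pdx (fun x' t' => pdx (pdx u) x' t' * u x' t') x t
      = (2 * a * b) * d + a ^ 2 * c := by
    have hfun : (fun x' => pdx (pdx u) x' t * u x' t)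
        = fun x' => (pdx v x' t) ^ 2 * u x' t :=
      funext fun x' => by rw [h2 x' t]
    have hder : HasDerivAt (fun x' => (pdx v x' t) ^ 2 * u x' t)
        (((2 : ℕ) * (pdx v x t) ^ 1 * b) * d + (pdx v x t) ^ 2 * c) x :=
      ((hasDerivAt_pdx (pdx v) hvx x t).pow 2).mul (hasDerivAt_pdx u hu x t)
    have : pdx (fun x' t' => pdx (pdx u) x' t' * u x' t') x t
        = deriv (fun x' => (pdx v x' t) ^ 2 * u x' t) x := by
      show deriv (fun x' => pdx (pdx u) x' t * u x' t) x = _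
      rw [hfun]
    rw [this, hder.deriv]
    push_cast
    ring
  rw [E1, E2, h2 x t, ← ha]
  have he' : e = -(c * a + d * b) := by rw [HC]; linarith
  rw [he']
  ring
end

section
/- Conversely, let m : ℝ×ℝ → ℝ be a smooth positive solution of m_t + m u_x + (u m)_x = 0 where u is smooth with Mu = m for a linear operator M commuting with ∂_x, ∂_t. If v is smooth with v_x = √m, then (v_t + u v_x)_x = 0. -/
section aux

variable {f : ℝ → ℝ → ℝ}

/-- The x-slice curve. -/
lemma aux_hasDerivAt_slice_x (t x : ℝ) :
    HasDerivAt (fun x' : ℝ => (x', t)) ((1 : ℝ), (0 : ℝ)) x :=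
  (hasDerivAt_id x).prodMk (hasDerivAt_const x t)

lemma aux_hasDerivAt_slice_t (x t : ℝ) :
    HasDerivAt (fun t' : ℝ => (x, t')) ((0 : ℝ), (1 : ℝ)) t :=
  (hasDerivAt_const t x).prodMk (hasDerivAt_id t)

lemma aux_pdx_hasDeriv (hf : ContDiff ℝ (⊤ : ℕ∞) ↿f) (x t : ℝ) :
    HasDerivAt (fun x' => f x' t) (fderiv ℝ ↿f (x, t) (1, 0)) x := by
  have hF := (hf.differentiable (by simp) (x, t)).hasFDerivAt
  exact hF.comp_hasDerivAt x (aux_hasDerivAt_slice_x t x)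

lemma aux_pdt_hasDeriv (hf : ContDiff ℝ (⊤ : ℕ∞) ↿f) (x t : ℝ) :
    HasDerivAt (fun t' => f x t') (fderiv ℝ ↿f (x, t) (0, 1)) t := by
  have hF := (hf.differentiable (by simp) (x, t)).hasFDerivAt
  exact hF.comp_hasDerivAt t (aux_hasDerivAt_slice_t x t)

lemma aux_pdx_eq (hf : ContDiff ℝ (⊤ : ℕ∞) ↿f) (x t : ℝ) :
    pdx f x t = fderiv ℝ ↿f (x, t) (1, 0) :=
  (aux_pdx_hasDeriv hf x t).deriv

lemma aux_pdt_eq (hf : ContDiff ℝ (⊤ : ℕ∞) ↿f) (x t : ℝ) :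
    pdt f x t = fderiv ℝ ↿f (x, t) (0, 1) :=
  (aux_pdt_hasDeriv hf x t).deriv

/-- `∂_x (∂_t f)` as a derivative, with value the second fderiv. -/
lemma aux_pdxt_hasDeriv (hf : ContDiff ℝ (⊤ : ℕ∞) ↿f) (x t : ℝ) :
    HasDerivAt (fun x' => pdt f x' t)
      (fderiv ℝ (fderiv ℝ ↿f) (x, t) (1, 0) (0, 1)) x := by
  have hG : Differentiable ℝ (fderiv ℝ ↿f) :=
    (hf.fderiv_right (m := 1) (WithTop.coe_le_coe.mpr le_top)).differentiable one_ne_zero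
  have hG' := (hG (x, t)).hasFDerivAt
  have happly := ((ContinuousLinearMap.apply ℝ ℝ ((0 : ℝ), (1 : ℝ))).hasFDerivAt
    (x := fderiv ℝ ↿f (x, t)))
  have hcomp := (happly.comp (x, t) hG').comp_hasDerivAt x (aux_hasDerivAt_slice_x t x)
  have : HasDerivAt (fun x' => fderiv ℝ ↿f (x', t) (0, 1))
      (fderiv ℝ (fderiv ℝ ↿f) (x, t) (1, 0) (0, 1)) x := hcomp
  refine this.congr_deriv rfl |>.congr_of_eventuallyEq ?_
  filter_upwards with x' using (aux_pdt_eq hf x' t)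

/-- Clairaut: `∂_x ∂_t f = ∂_t ∂_x f` for smooth `f`. -/
lemma aux_pdtx_hasDeriv (hf : ContDiff ℝ (⊤ : ℕ∞) ↿f) (x t : ℝ) :
    HasDerivAt (fun t' => pdx f x t')
      (fderiv ℝ (fderiv ℝ ↿f) (x, t) (0, 1) (1, 0)) t := by
  have hG : Differentiable ℝ (fderiv ℝ ↿f) :=
    (hf.fderiv_right (m := 1) (WithTop.coe_le_coe.mpr le_top)).differentiable one_ne_zero
  have hG' := (hG (x, t)).hasFDerivAt
  have happly := ((ContinuousLinearMap.apply ℝ ℝ ((1 : ℝ), (0 : ℝ))).hasFDerivAt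
    (x := fderiv ℝ ↿f (x, t)))
  have hcomp := (happly.comp (x, t) hG').comp_hasDerivAt t (aux_hasDerivAt_slice_t x t)
  have : HasDerivAt (fun t' => fderiv ℝ ↿f (x, t') (1, 0))
      (fderiv ℝ (fderiv ℝ ↿f) (x, t) (0, 1) (1, 0)) t := hcomp
  refine this.congr_of_eventuallyEq ?_
  filter_upwards with t' using (aux_pdx_eq hf x t')

lemma aux_clairaut (hf : ContDiff ℝ (⊤ : ℕ∞) ↿f) (x t : ℝ) :
    HasDerivAt (fun x' => pdt f x' t) (pdt (fun x' t' => pdx f x' t') x t) x := by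
  have hsymm : IsSymmSndFDerivAt ℝ ↿f (x, t) :=
    hf.contDiffAt.isSymmSndFDerivAt (by rw [minSmoothness_of_isRCLikeNormedField]; exact WithTop.coe_le_coe.mpr le_top)
  have h1 := aux_pdxt_hasDeriv hf x t
  have h2 := aux_pdtx_hasDeriv hf x t
  have : pdt (fun x' t' => pdx f x' t') x t
      = fderiv ℝ (fderiv ℝ ↿f) (x, t) (0, 1) (1, 0) := h2.deriv
  rw [this, hsymm.eq]
  exact h1

end aux

/-- Converse direction: if `m > 0` is a smooth solution of
`m_t + m u_x + (u m)_x = 0`, where `u` is smooth with `Mu = m` for a linear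
operator `M` commuting with `∂_x` and `∂_t`, and `v` is smooth with
`v_x = √m`, then `(v_t + u v_x)_x = 0`. -/
theorem twist_system_from_generalized_hunter_saxton
    (M : (ℝ → ℝ) →ₗ[ℝ] (ℝ → ℝ))
    (hMx : ∀ f : ℝ → ℝ, M (deriv f) = deriv (M f))
    (u v m : ℝ → ℝ → ℝ)
    (hu : ContDiff ℝ (⊤ : ℕ∞) ↿u) (hv : ContDiff ℝ (⊤ : ℕ∞) ↿v) (hm : ContDiff ℝ (⊤ : ℕ∞) ↿m)
    (hmpos : ∀ x t, 0 < m x t)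
    (hMu : ∀ t, (fun x => m x t) = M (fun x => u x t))
    (hMt : ∀ x t, pdt m x t = M (fun x' => pdt u x' t) x)
    (hHS : ∀ x t, pdt m x t + m x t * pdx u x t
        + pdx (fun x' t' => u x' t' * m x' t') x t = 0)
    (hvx : ∀ x t, pdx v x t = Real.sqrt (m x t)) :
    ∀ x t, pdx (fun x' t' => pdt v x' t' + u x' t' * pdx v x' t') x t = 0 := by
  intro x t
  set s : ℝ := Real.sqrt (m x t) with hs
  have hmx := hmpos x t
  have hspos : 0 < s := Real.sqrt_pos.mpr hmx
  have hsne : s ≠ 0 := ne_of_gt hspos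
  have hs2 : s ^ 2 = m x t := Real.sq_sqrt hmx.le
  -- derivatives of sqrt of m in x and in t
  have hmx_deriv : HasDerivAt (fun x' => m x' t) (pdx m x t) x := by
    simpa [aux_pdx_eq hm x t] using aux_pdx_hasDeriv hm x t
  have hmt_deriv : HasDerivAt (fun t' => m x t') (pdt m x t) t := by
    simpa [aux_pdt_eq hm x t] using aux_pdt_hasDeriv hm x t
  have hsqx : HasDerivAt (fun x' => Real.sqrt (m x' t)) (pdx m x t / (2 * s)) x :=
    hmx_deriv.sqrt (ne_of_gt hmx)
  have hsqt : HasDerivAt (fun t' => Real.sqrt (m x t')) (pdt m x t / (2 * s)) t :=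
    hmt_deriv.sqrt (ne_of_gt hmx)
  -- ∂_t (∂_x v) = ∂_t √m
  have hpdtpdx : pdt (fun x' t' => pdx v x' t') x t = pdt m x t / (2 * s) := by
    have : (fun t' => pdx v x t') = fun t' => Real.sqrt (m x t') := by
      funext t'; exact hvx x t'
    show deriv (fun t' => pdx v x t') t = _
    rw [this]; exact hsqt.deriv
  -- term A: ∂_x (∂_t v)
  have hA : HasDerivAt (fun x' => pdt v x' t) (pdt m x t / (2 * s)) x := by
    have := aux_clairaut hv x t
    rwa [hpdtpdx] at this
  -- term B: ∂_x (u ∂_x v)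
  have hux : HasDerivAt (fun x' => u x' t) (pdx u x t) x := by
    simpa [aux_pdx_eq hu x t] using aux_pdx_hasDeriv hu x t
  have hB : HasDerivAt (fun x' => u x' t * pdx v x' t)
      (pdx u x t * s + u x t * (pdx m x t / (2 * s))) x := by
    have heq : (fun x' => u x' t * pdx v x' t)
        = fun x' => u x' t * Real.sqrt (m x' t) := by
      funext x'; rw [hvx x' t]
    rw [heq]
    simpa [hs] using hux.fun_mul hsqx
  -- expand the product in hHS
  have hHSx : pdt m x t + m x t * pdx u x t
      + (pdx u x t * m x t + u x t * pdx m x t) = 0 := by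
    have hprod : pdx (fun x' t' => u x' t' * m x' t') x t
        = pdx u x t * m x t + u x t * pdx m x t := (hux.mul hmx_deriv).deriv
    have := hHS x t
    rwa [hprod] at this
  -- assemble
  have htotal : pdx (fun x' t' => pdt v x' t' + u x' t' * pdx v x' t') x t
      = pdt m x t / (2 * s) + (pdx u x t * s + u x t * (pdx m x t / (2 * s))) :=
    (hA.add hB).deriv
  rw [htotal]
  have hm_eq : m x t = s ^ 2 := hs2.symm
  rw [hm_eq] at hHSx
  field_simp
  nlinarith [hHSx, sq_nonneg s]
end

section
/- The function u(x,t) = 0 for x ≤ 0 and u(x,t) = 2x/t for x > 0 is, for t > 0, a distributional (weak) solution of the differentiated Hunter-Saxton equation ((u_t + u u_x)_x − (1/2)u_x²)_x = 0, and its second spatial derivative is u_xx(·,t) = (2/t)δ₀, a non-negative distribution. -/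
open MeasureTheory

open Filter Topology Set

lemma tendsto_zero_of_hcs {g : ℝ → ℝ} (hg : HasCompactSupport g) :
    Tendsto g atTop (𝓝 0) := by
  obtain ⟨R, hR⟩ := (hg : IsCompact (tsupport g)).bddAbove
  refine Tendsto.congr' ?_ tendsto_const_nhds
  filter_upwards [eventually_gt_atTop R] with x hx
  exact (image_eq_zero_of_notMem_tsupport fun h => absurd (hR h) (not_le.2 hx)).symm

variable {f : ℝ → ℝ → ℝ}

lemma slice_contDiff (hf : ContDiff ℝ (⊤:ℕ∞) ↿f) (t : ℝ) :
    ContDiff ℝ (⊤:ℕ∞) fun x => f x t :=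
  hf.comp (contDiff_id.prodMk contDiff_const)

lemma sliceT_contDiff (hf : ContDiff ℝ (⊤:ℕ∞) ↿f) (x : ℝ) :
    ContDiff ℝ (⊤:ℕ∞) fun t => f x t :=
  hf.comp (contDiff_const.prodMk contDiff_id)

lemma slice_hcs (hf : HasCompactSupport ↿f) (t : ℝ) :
    HasCompactSupport fun x => f x t := by
  apply HasCompactSupport.intro (IsCompact.image hf continuous_fst)
  intro x hx
  exact image_eq_zero_of_notMem_tsupport (f := ↿f) fun h => hx ⟨(x,t), h, rfl⟩

lemma pdx_eq (hf : Differentiable ℝ ↿f) (x t : ℝ) :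
    pdx f x t = fderiv ℝ ↿f (x, t) (1, 0) := by
  have h1 : HasDerivAt (fun x' : ℝ => (x', t)) ((1:ℝ), (0:ℝ)) x :=
    (hasDerivAt_id x).prodMk (hasDerivAt_const x t)
  exact ((hf (x,t)).hasFDerivAt.comp_hasDerivAt x h1).deriv

lemma pdt_eq (hf : Differentiable ℝ ↿f) (x t : ℝ) :
    pdt f x t = fderiv ℝ ↿f (x, t) (0, 1) := by
  have h1 : HasDerivAt (fun t' : ℝ => (x, t')) ((0:ℝ), (1:ℝ)) t :=
    (hasDerivAt_const t x).prodMk (hasDerivAt_id t)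
  exact ((hf (x,t)).hasFDerivAt.comp_hasDerivAt t h1).deriv

lemma uncurry_pdx (hf : ContDiff ℝ (⊤:ℕ∞) ↿f) :
    ContDiff ℝ (⊤:ℕ∞) ↿(pdx f) := by
  have h : ↿(pdx f) = fun p : ℝ×ℝ => fderiv ℝ ↿f p (1, 0) := by
    funext p; obtain ⟨x,t⟩ := p; exact pdx_eq (hf.differentiable (by simp)) x t
  rw [h]
  exact (hf.fderiv_right (by simp)).clm_apply contDiff_const

lemma uncurry_pdt (hf : ContDiff ℝ (⊤:ℕ∞) ↿f) :
    ContDiff ℝ (⊤:ℕ∞) ↿(pdt f) := by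
  have h : ↿(pdt f) = fun p : ℝ×ℝ => fderiv ℝ ↿f p (0, 1) := by
    funext p; obtain ⟨x,t⟩ := p; exact pdt_eq (hf.differentiable (by simp)) x t
  rw [h]
  exact (hf.fderiv_right (by simp)).clm_apply contDiff_const

lemma uncurry_pdt_hcs (hf : HasCompactSupport ↿f) (hd : Differentiable ℝ ↿f) :
    HasCompactSupport ↿(pdt f) := by
  have h : ↿(pdt f) = fun p : ℝ×ℝ => fderiv ℝ ↿f p (0, 1) := by
    funext p; obtain ⟨x,t⟩ := p; exact pdt_eq hd x t
  rw [h]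
  exact hf.fderiv_apply ℝ _

lemma pdt_pdx_swap (hf : ContDiff ℝ (⊤:ℕ∞) ↿f) (x t : ℝ) :
    pdt (pdx f) x t = pdx (pdt f) x t := by
  have hdiff : Differentiable ℝ ↿f := hf.differentiable (by simp)
  have hD : ContDiff ℝ (⊤:ℕ∞) (fderiv ℝ ↿f) := hf.fderiv_right (by simp)
  have hD2 : HasFDerivAt (fderiv ℝ ↿f) (fderiv ℝ (fderiv ℝ ↿f) (x, t)) (x, t) :=
    ((hD.differentiable (by simp)) (x,t)).hasFDerivAt
  have hsymm := second_derivative_symmetric (fun y => (hdiff y).hasFDerivAt) hD2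
    ((1:ℝ),(0:ℝ)) ((0:ℝ),(1:ℝ))
  have hA : ∀ v : ℝ × ℝ, HasFDerivAt (fun p : ℝ×ℝ => fderiv ℝ ↿f p v)
      ((fderiv ℝ (fderiv ℝ ↿f) (x,t)).flip v) (x,t) := by
    intro v
    have := hD2.clm_apply (hasFDerivAt_const v (x,t))
    simpa using this
  have e1 : pdt (pdx f) x t = fderiv ℝ (fderiv ℝ ↿f) (x,t) (0,1) (1,0) := by
    have h1 : HasDerivAt (fun t' : ℝ => (x, t')) ((0:ℝ),(1:ℝ)) t :=
      (hasDerivAt_const t x).prodMk (hasDerivAt_id t)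
    have h2 := (hA (1,0)).comp_hasDerivAt t h1
    have h3 : pdt (pdx f) x t = deriv ((fun p : ℝ×ℝ => fderiv ℝ ↿f p (1,0)) ∘
        (fun t' : ℝ => (x, t'))) t := by
      show deriv (fun t' => pdx f x t') t = _
      congr 1
      funext t'
      exact pdx_eq hdiff x t'
    rw [h3, h2.deriv]
    rfl
  have e2 : pdx (pdt f) x t = fderiv ℝ (fderiv ℝ ↿f) (x,t) (1,0) (0,1) := by
    have h1 : HasDerivAt (fun x' : ℝ => (x', t)) ((1:ℝ),(0:ℝ)) x :=
      (hasDerivAt_id x).prodMk (hasDerivAt_const x t)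
    have h2 := (hA (0,1)).comp_hasDerivAt x h1
    have h3 : pdx (pdt f) x t = deriv ((fun p : ℝ×ℝ => fderiv ℝ ↿f p (0,1)) ∘
        (fun x' : ℝ => (x', t))) x := by
      show deriv (fun x' => pdt f x' t) x = _
      congr 1
      funext x'
      exact pdt_eq hdiff x' t
    rw [h3, h2.deriv]
    rfl
  rw [e1, e2, hsymm]

lemma pdt_pdx_pdx (hf : ContDiff ℝ (⊤:ℕ∞) ↿f) (x t : ℝ) :
    pdt (pdx (pdx f)) x t = deriv (deriv (fun y => pdt f y t)) x := by
  rw [pdt_pdx_swap (uncurry_pdx hf) x t]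
  have h2 : (fun x' => pdt (pdx f) x' t) = (fun x' => pdx (pdt f) x' t) := by
    funext x'; exact pdt_pdx_swap hf x' t
  show deriv (fun x' => pdt (pdx f) x' t) x = _
  rw [h2]
  rfl

lemma deriv_zero_of_nmem {g : ℝ → ℝ} {x : ℝ} (hx : x ∉ tsupport g) : deriv g x = 0 := by
  by_contra h
  exact hx (support_deriv_subset (by simpa using h))

lemma nmem_tsupport_deriv {g : ℝ → ℝ} {x : ℝ} (hx : x ∉ tsupport g) :
    x ∉ tsupport (deriv g) := fun h =>
  hx (closure_minimal support_deriv_subset (isClosed_tsupport g) h)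

lemma key2 (t : ℝ) (ht : 0 < t) (ψ : ℝ → ℝ) (hψ : ContDiff ℝ (⊤:ℕ∞) ψ)
    (hcs : HasCompactSupport ψ) :
    (∫ x : ℝ, (if 0 < x then 2*x/t else 0) * deriv (deriv ψ) x) = 2/t * ψ 0 := by
  have hψ' : ContDiff ℝ (⊤:ℕ∞) (deriv ψ) := (contDiff_infty_iff_deriv.mp hψ).2
  have hψ'' : ContDiff ℝ (⊤:ℕ∞) (deriv (deriv ψ)) := (contDiff_infty_iff_deriv.mp hψ').2
  set A : ℝ → ℝ := fun x => 2/t * (x * deriv ψ x - ψ x) with hAdef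
  set B : ℝ → ℝ := fun x => (if 0 < x then 2*x/t else 0) * deriv (deriv ψ) x with hBdef
  have hAd : ∀ x ∈ Set.Ioi (0:ℝ), HasDerivAt A (B x) x := by
    intro x hx
    have h3 : HasDerivAt ψ (deriv ψ x) x := ((hψ.differentiable (by simp)) x).hasDerivAt
    have h4 : HasDerivAt (deriv ψ) (deriv (deriv ψ) x) x :=
      ((hψ'.differentiable (by simp)) x).hasDerivAt
    have h := (((hasDerivAt_id x).mul h4).sub h3).const_mul (2/t)
    refine h.congr_deriv ?_
    simp only [hBdef, if_pos (Set.mem_Ioi.mp hx), id_eq]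
    ring
  have hAcs : HasCompactSupport A := by
    apply HasCompactSupport.intro (hcs : IsCompact (tsupport ψ))
    intro x hx
    have h0 : ψ x = 0 := image_eq_zero_of_notMem_tsupport hx
    have h1 : deriv ψ x = 0 := deriv_zero_of_nmem hx
    simp [hAdef, h0, h1]
  have hBzero : ∀ x, x ∉ Set.Ioi (0:ℝ) → B x = 0 := by
    intro x hx
    have : ¬ (0:ℝ) < x := by simpa using hx
    simp [hBdef, this]
  have hg : Continuous (fun x : ℝ => 2*x/t * deriv (deriv ψ) x) := by
    have := hψ''.continuous
    fun_prop
  have hgcs : HasCompactSupport (fun x : ℝ => 2*x/t * deriv (deriv ψ) x) := by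
    apply HasCompactSupport.intro (hcs : IsCompact (tsupport ψ))
    intro x hx
    have h2 : deriv (deriv ψ) x = 0 := deriv_zero_of_nmem (nmem_tsupport_deriv hx)
    simp [h2]
  have hBint : MeasureTheory.IntegrableOn B (Set.Ioi (0:ℝ)) := by
    refine ((hg.integrable_of_hasCompactSupport hgcs).integrableOn).congr_fun ?_ measurableSet_Ioi
    intro x hx
    simp [hBdef, if_pos (Set.mem_Ioi.mp hx)]
  have hAtend : Filter.Tendsto A Filter.atTop (𝓝 0) := tendsto_zero_of_hcs hAcs
  have hAcont : ContinuousWithinAt A (Set.Ici (0:ℝ)) 0 := by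
    have : Continuous A := by
      have h1 := hψ.continuous
      have h2 := hψ'.continuous
      fun_prop
    exact this.continuousWithinAt
  have := integral_Ioi_of_hasDerivAt_of_tendsto hAcont hAd hBint hAtend
  rw [← setIntegral_eq_integral_of_forall_compl_eq_zero hBzero, this]
  simp [hAdef]

lemma key1 (φ : ℝ → ℝ → ℝ) (hφ : ContDiff ℝ (⊤:ℕ∞) ↿φ) (hcs : HasCompactSupport ↿φ)
    (t : ℝ) (ht : 0 < t) :
    (∫ x : ℝ, ((if 0 < x then 2*x/t else 0) * pdt (pdx (pdx φ)) x t
        + ((if 0 < x then 2*x/t else 0) ^ 2 / 2) * pdx (pdx (pdx φ)) x t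
        - (1/2) * (if 0 < x then 2/t else 0) ^ 2 * pdx φ x t))
      = 2/t * pdt φ 0 t - 2/t^2 * φ 0 t := by
  set ψ : ℝ → ℝ := fun y => φ y t with hψdef
  set χ : ℝ → ℝ := fun y => pdt φ y t with hχdef
  have hψ : ContDiff ℝ (⊤:ℕ∞) ψ := slice_contDiff hφ t
  have hχ : ContDiff ℝ (⊤:ℕ∞) χ := slice_contDiff (uncurry_pdt hφ) t
  have hψs : HasCompactSupport ψ := slice_hcs hcs t
  have hχs : HasCompactSupport χ :=
    slice_hcs (uncurry_pdt_hcs hcs (hφ.differentiable (by simp))) t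
  have hψ' : ContDiff ℝ (⊤:ℕ∞) (deriv ψ) := (contDiff_infty_iff_deriv.mp hψ).2
  have hψ'' : ContDiff ℝ (⊤:ℕ∞) (deriv (deriv ψ)) := (contDiff_infty_iff_deriv.mp hψ').2
  have hψ''' : ContDiff ℝ (⊤:ℕ∞) (deriv (deriv (deriv ψ))) :=
    (contDiff_infty_iff_deriv.mp hψ'').2
  have hχ' : ContDiff ℝ (⊤:ℕ∞) (deriv χ) := (contDiff_infty_iff_deriv.mp hχ).2
  have hχ'' : ContDiff ℝ (⊤:ℕ∞) (deriv (deriv χ)) := (contDiff_infty_iff_deriv.mp hχ').2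
  have e1 : ∀ x : ℝ, pdt (pdx (pdx φ)) x t = deriv (deriv χ) x := by
    intro x; rw [pdt_pdx_pdx hφ x t]
  have e2 : ∀ x : ℝ, pdx (pdx (pdx φ)) x t = deriv (deriv (deriv ψ)) x := fun _ => rfl
  have e3 : ∀ x : ℝ, pdx φ x t = deriv ψ x := fun _ => rfl
  set A : ℝ → ℝ := fun x => 2/t * (x * deriv χ x - χ x)
    + 2/t^2 * (x^2 * deriv (deriv ψ) x - 2*(x * deriv ψ x) + 2 * ψ x)
    - 2/t^2 * ψ x with hAdef
  set B : ℝ → ℝ := fun x => ((if 0 < x then 2*x/t else 0) * pdt (pdx (pdx φ)) x t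
        + ((if 0 < x then 2*x/t else 0) ^ 2 / 2) * pdx (pdx (pdx φ)) x t
        - (1/2) * (if 0 < x then 2/t else 0) ^ 2 * pdx φ x t) with hBdef
  have hBpos : ∀ x : ℝ, 0 < x → B x = 2*x/t * deriv (deriv χ) x
      + (2*x/t)^2/2 * deriv (deriv (deriv ψ)) x - 1/2*(2/t)^2 * deriv ψ x := by
    intro x hx
    simp only [hBdef, if_pos hx, e1, e2, e3]
  have hAd : ∀ x ∈ Set.Ioi (0:ℝ), HasDerivAt A (B x) x := by
    intro x hx
    have hx' : (0:ℝ) < x := hx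
    have h1 : HasDerivAt χ (deriv χ x) x := ((hχ.differentiable (by simp)) x).hasDerivAt
    have h2 : HasDerivAt (deriv χ) (deriv (deriv χ) x) x :=
      ((hχ'.differentiable (by simp)) x).hasDerivAt
    have h3 : HasDerivAt ψ (deriv ψ x) x := ((hψ.differentiable (by simp)) x).hasDerivAt
    have h4 : HasDerivAt (deriv ψ) (deriv (deriv ψ) x) x :=
      ((hψ'.differentiable (by simp)) x).hasDerivAt
    have h5 : HasDerivAt (deriv (deriv ψ)) (deriv (deriv (deriv ψ)) x) x :=
      ((hψ''.differentiable (by simp)) x).hasDerivAt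
    have hT1 := (((hasDerivAt_id' (x := x)).mul h2).sub h1).const_mul (2/t)
    have hT2 := ((((hasDerivAt_pow 2 x).mul h5).sub
        (((hasDerivAt_id' (x := x)).mul h4).const_mul 2)).add (h3.const_mul 2)).const_mul (2/t^2)
    have hT3 := h3.const_mul (2/t^2)
    have h := (hT1.add hT2).sub hT3
    rw [hBpos x hx', hAdef]
    refine h.congr_deriv ?_
    push_cast
    ring
  have hzero : ∀ x : ℝ, x ∉ tsupport ψ ∪ tsupport χ →
      ψ x = 0 ∧ deriv ψ x = 0 ∧ deriv (deriv ψ) x = 0 ∧ deriv (deriv (deriv ψ)) x = 0 ∧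
      χ x = 0 ∧ deriv χ x = 0 ∧ deriv (deriv χ) x = 0 := by
    intro x hx
    have hxψ : x ∉ tsupport ψ := fun h => hx (Set.mem_union_left _ h)
    have hxχ : x ∉ tsupport χ := fun h => hx (Set.mem_union_right _ h)
    exact ⟨image_eq_zero_of_notMem_tsupport hxψ, deriv_zero_of_nmem hxψ,
      deriv_zero_of_nmem (nmem_tsupport_deriv hxψ),
      deriv_zero_of_nmem (nmem_tsupport_deriv (nmem_tsupport_deriv hxψ)),
      image_eq_zero_of_notMem_tsupport hxχ, deriv_zero_of_nmem hxχ,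
      deriv_zero_of_nmem (nmem_tsupport_deriv hxχ)⟩
  have hKc : IsCompact (tsupport ψ ∪ tsupport χ) :=
    IsCompact.union hψs hχs
  have hAcs : HasCompactSupport A := by
    apply HasCompactSupport.intro hKc
    intro x hx
    obtain ⟨z1, z2, z3, _, z5, z6, _⟩ := hzero x hx
    simp [hAdef, z1, z2, z3, z5, z6]
  have hBzero : ∀ x : ℝ, x ∉ Set.Ioi (0:ℝ) → B x = 0 := by
    intro x hx
    have : ¬ (0:ℝ) < x := by simpa using hx
    simp [hBdef, this]
  set g : ℝ → ℝ := fun x => 2*x/t * deriv (deriv χ) x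
      + (2*x/t)^2/2 * deriv (deriv (deriv ψ)) x - 1/2*(2/t)^2 * deriv ψ x with hgdef
  have hgc : Continuous g := by
    have c1 := hχ''.continuous
    have c2 := hψ'''.continuous
    have c3 := hψ'.continuous
    fun_prop
  have hgcs : HasCompactSupport g := by
    apply HasCompactSupport.intro hKc
    intro x hx
    obtain ⟨_, z2, _, z4, _, _, z7⟩ := hzero x hx
    simp [hgdef, z2, z4, z7]
  have hBint : MeasureTheory.IntegrableOn B (Set.Ioi (0:ℝ)) := by
    refine ((hgc.integrable_of_hasCompactSupport hgcs).integrableOn).congr_fun ?_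
      measurableSet_Ioi
    intro x hx
    exact (hBpos x hx).symm
  have hAtend : Filter.Tendsto A Filter.atTop (𝓝 0) := tendsto_zero_of_hcs hAcs
  have hAcont : ContinuousWithinAt A (Set.Ici (0:ℝ)) 0 := by
    have : Continuous A := by
      have c1 := hψ.continuous
      have c2 := hψ'.continuous
      have c3 := hψ''.continuous
      have c4 := hχ.continuous
      have c5 := hχ'.continuous
      fun_prop
    exact this.continuousWithinAt
  have hmain := integral_Ioi_of_hasDerivAt_of_tendsto hAcont hAd hBint hAtend
  rw [← setIntegral_eq_integral_of_forall_compl_eq_zero hBzero, hmain]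
  have hψ0 : ψ 0 = φ 0 t := rfl
  have hχ0 : χ 0 = pdt φ 0 t := rfl
  simp only [hAdef, hψ0, hχ0]
  ring

/-- The function `u(x,t) = 2x/t` for `x > 0`, `u = 0` for `x ≤ 0`, is a
distributional solution of the differentiated Hunter–Saxton equation
`((u_t + u u_x)_x − ½u_x²)_x = 0` on `ℝ × (0,∞)` (weak form obtained by
testing with `φ`, writing `u u_x = (u²/2)_x`), and its second spatial
derivative is the non-negative distribution `(2/t)δ₀`. -/
theorem hs_weak_solution_delta :
    let u : ℝ → ℝ → ℝ := fun x t => if 0 < x then 2 * x / t else 0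
    let ux : ℝ → ℝ → ℝ := fun x t => if 0 < x then 2 / t else 0
    (∀ φ : ℝ → ℝ → ℝ, ContDiff ℝ (⊤ : ℕ∞) ↿φ → HasCompactSupport ↿φ →
      tsupport ↿φ ⊆ Set.univ ×ˢ Set.Ioi (0 : ℝ) →
      ∫ t in Set.Ioi (0 : ℝ), ∫ x : ℝ,
        (u x t * pdt (pdx (pdx φ)) x t
          + (u x t ^ 2 / 2) * pdx (pdx (pdx φ)) x t
          - (1 / 2) * (ux x t) ^ 2 * pdx φ x t) = 0)
    ∧ (∀ t : ℝ, 0 < t → ∀ ψ : ℝ → ℝ, ContDiff ℝ (⊤ : ℕ∞) ψ → HasCompactSupport ψ →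
        (∫ x : ℝ, u x t * deriv (deriv ψ) x) = (2 / t) * ψ 0
        ∧ ((∀ x, 0 ≤ ψ x) → 0 ≤ (2 / t) * ψ 0)) := by
  intro u ux
  have hu : ∀ x t : ℝ, u x t = if 0 < x then 2 * x / t else 0 := fun _ _ => rfl
  have hux : ∀ x t : ℝ, ux x t = if 0 < x then 2 / t else 0 := fun _ _ => rfl
  constructor
  · intro φ hφtop hcs hsupp
    have hφ : ContDiff ℝ (⊤:ℕ∞) ↿φ := hφtop.of_le (by simp)
    have hg0 : ContDiff ℝ (⊤:ℕ∞) (fun s : ℝ => φ 0 s) := sliceT_contDiff hφ 0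
    obtain ⟨ε, hε, hεz⟩ : ∃ ε > (0:ℝ), ∀ s ≤ ε, φ 0 s = 0 := by
      classical
      set S : Set ℝ := (fun s : ℝ => ((0:ℝ), s)) ⁻¹' tsupport ↿φ with hSdef
      have hSc : IsClosed S := (isClosed_tsupport ↿φ).preimage (by fun_prop)
      have hSsub : S ⊆ Prod.snd '' tsupport ↿φ := fun s hs => ⟨((0:ℝ), s), hs, rfl⟩
      have hScomp : IsCompact S :=
        ((hcs : IsCompact (tsupport ↿φ)).image continuous_snd).of_isClosed_subset hSc hSsub
      have hSpos : ∀ s ∈ S, (0:ℝ) < s := fun s hs => (hsupp hs).2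
      have key : ∀ s ∉ S, φ 0 s = 0 := fun s hs =>
        image_eq_zero_of_notMem_tsupport (f := ↿φ) hs
      rcases S.eq_empty_or_nonempty with h | h
      · exact ⟨1, one_pos, fun s _ => key s (by simp [h])⟩
      · have hmem := hScomp.sInf_mem h
        have hpos := hSpos _ hmem
        refine ⟨sInf S / 2, by linarith, fun s hs => key s fun hsS => ?_⟩
        have := csInf_le hScomp.bddBelow hsS
        linarith
    set G : ℝ → ℝ := fun s => 2 / s * φ 0 s with hGdef
    have hGsm : ContDiff ℝ (⊤:ℕ∞) G := by
      rw [contDiff_iff_contDiffAt]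
      intro s
      rcases lt_or_ge s ε with h | h
      · have hev : G =ᶠ[𝓝 s] (fun _ => (0:ℝ)) := by
          filter_upwards [Iio_mem_nhds h] with y hy
          simp [hGdef, hεz y (le_of_lt hy)]
        exact (contDiffAt_const (c := (0:ℝ))).congr_of_eventuallyEq hev
      · have hs0 : s ≠ 0 := ne_of_gt (lt_of_lt_of_le hε h)
        exact ((contDiffAt_const (c := (2:ℝ))).div contDiffAt_id hs0).mul hg0.contDiffAt
    have hGcs : HasCompactSupport G := by
      apply HasCompactSupport.intro ((hcs : IsCompact (tsupport ↿φ)).image continuous_snd)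
      intro s hs
      have h0 : φ 0 s = 0 :=
        image_eq_zero_of_notMem_tsupport (f := ↿φ) fun h => hs ⟨((0:ℝ), s), h, rfl⟩
      simp [hGdef, h0]
    have hG' : ∀ s ∈ Set.Ioi (0:ℝ),
        HasDerivAt G (2/s * pdt φ 0 s - 2/s^2 * φ 0 s) s := by
      intro s hs
      have hs0 : s ≠ 0 := ne_of_gt hs
      have h1 : HasDerivAt (fun y : ℝ => 2 / y) (-(2 / s^2)) s := by
        have := (hasDerivAt_inv hs0).const_mul (2:ℝ)
        simpa [div_eq_mul_inv, mul_comm, mul_left_comm, mul_assoc, neg_mul, mul_neg]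
          using this
      have h2 : HasDerivAt (fun y : ℝ => φ 0 y) (pdt φ 0 s) s :=
        ((hg0.differentiable (by simp)) s).hasDerivAt
      have h := h1.mul h2
      rw [hGdef]
      refine h.congr_deriv ?_
      ring
    have hEq1 : Set.EqOn (fun s : ℝ => ∫ x : ℝ,
          (u x s * pdt (pdx (pdx φ)) x s
            + (u x s ^ 2 / 2) * pdx (pdx (pdx φ)) x s
            - (1 / 2) * (ux x s) ^ 2 * pdx φ x s))
        (fun s => 2/s * pdt φ 0 s - 2/s^2 * φ 0 s) (Set.Ioi 0) := by
      intro s hs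
      have hk := key1 φ hφ hcs s hs
      simp only [hu, hux]
      exact hk
    rw [setIntegral_congr_fun measurableSet_Ioi hEq1]
    have hEq2 : Set.EqOn (fun s : ℝ => 2/s * pdt φ 0 s - 2/s^2 * φ 0 s) (deriv G)
        (Set.Ioi 0) := fun s hs => ((hG' s hs).deriv).symm
    rw [setIntegral_congr_fun measurableSet_Ioi hEq2]
    have hdint : MeasureTheory.IntegrableOn (deriv G) (Set.Ioi (0:ℝ)) :=
      (((contDiff_infty_iff_deriv.mp hGsm).2.continuous).integrable_of_hasCompactSupport
        hGcs.deriv).integrableOn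
    have hfin := integral_Ioi_of_hasDerivAt_of_tendsto
      (hGsm.continuous.continuousWithinAt)
      (fun s _ => ((hGsm.differentiable (by simp)) s).hasDerivAt) hdint
      (tendsto_zero_of_hcs hGcs)
    rw [hfin]
    simp [hGdef]
  · intro t ht ψ hψtop hψcs
    refine ⟨?_, fun hpos => mul_nonneg (div_nonneg (by norm_num) ht.le) (hpos 0)⟩
    have hk := key2 t ht ψ (hψtop.of_le (by simp)) hψcs
    simp only [hu]
    exact hk
end

section
/- Let η₋ < η₊ < 0, let σ₊, σ₋ : [0,t*) → ℝ be smooth with σ₋ < σ₊ and σ₊′ + σ₊²/2 = σ₋′ + σ₋²/2, and set E₊(τ) = exp(−(1/4)∫₀^τ(σ₊−σ₋)), E₋(τ) = exp((1/4)∫₀^τ(σ₊−σ₋)). For η ∈ [η₋,η₊] define J(η,τ) = [(η₊−η)E₊ + (η−η₋)E₋]²/[(η₊−η₋)(σ₊−σ₋)]. Then J > 0 everywhere, J(η,0) = 1 when σ₊(0)−σ₋(0) = η₊−η₋, and J_τ/J = [(η₊−η)σ₋E₊ + (η−η₋)σ₊E₋]/[(η₊−η)E₊ + (η−η₋)E₋];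 in particular J_τ/J = σ₋ at η = η₋ and J_τ/J = σ₊ at η = η₊. -/
/-- Properties of the Jacobian `J` of the characteristic-coordinate
transformation for the twist-wave system: positivity, normalization `J = 1` at
`τ = 0`, and the logarithmic time-derivative formula
`J_τ/J = [(η₊−η)σ₋E₊ + (η−η₋)σ₊E₋]/[(η₊−η)E₊ + (η−η₋)E₋]`, which equals `σ₋`
at `η = η₋` and `σ₊` at `η = η₊`. -/
theorem jacobian_properties
    (ηm ηp tstar : ℝ) (hη : ηm < ηp) (hηp : ηp < 0)
    (σp σm : ℝ → ℝ) (hσp : ContDiff ℝ (⊤ : ℕ∞) σp) (hσm : ContDiff ℝ (⊤ : ℕ∞) σm)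
    (hlt : ∀ t ∈ Set.Ico (0 : ℝ) tstar, σm t < σp t)
    (hric : ∀ t ∈ Set.Ico (0 : ℝ) tstar,
      deriv σp t + (σp t) ^ 2 / 2 = deriv σm t + (σm t) ^ 2 / 2) :
    let Ep : ℝ → ℝ := fun τ =>
      Real.exp (-(1 / 4) * ∫ s in (0 : ℝ)..τ, (σp s - σm s))
    let Em : ℝ → ℝ := fun τ =>
      Real.exp ((1 / 4) * ∫ s in (0 : ℝ)..τ, (σp s - σm s))
    let J : ℝ → ℝ → ℝ := fun η τ =>
      ((ηp - η) * Ep τ + (η - ηm) * Em τ) ^ 2 / ((ηp - ηm) * (σp τ - σm τ))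
    (∀ η ∈ Set.Icc ηm ηp, ∀ τ ∈ Set.Ico (0 : ℝ) tstar, 0 < J η τ)
    ∧ (σp 0 - σm 0 = ηp - ηm → ∀ η ∈ Set.Icc ηm ηp, J η 0 = 1)
    ∧ (∀ η ∈ Set.Icc ηm ηp, ∀ τ ∈ Set.Ico (0 : ℝ) tstar,
        HasDerivAt (fun τ' => J η τ')
          (J η τ * (((ηp - η) * σm τ * Ep τ + (η - ηm) * σp τ * Em τ)
            / ((ηp - η) * Ep τ + (η - ηm) * Em τ))) τ)
    ∧ (∀ τ ∈ Set.Ico (0 : ℝ) tstar,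
        ((ηp - ηm) * σm τ * Ep τ + (ηm - ηm) * σp τ * Em τ)
            / ((ηp - ηm) * Ep τ + (ηm - ηm) * Em τ) = σm τ
        ∧ ((ηp - ηp) * σm τ * Ep τ + (ηp - ηm) * σp τ * Em τ)
            / ((ηp - ηp) * Ep τ + (ηp - ηm) * Em τ) = σp τ) := by
  intro Ep Em J
  have hc : Continuous fun s => σp s - σm s := hσp.continuous.sub hσm.continuous
  have hF : ∀ τ : ℝ, HasDerivAt (fun u => ∫ s in (0 : ℝ)..u, (σp s - σm s))
      (σp τ - σm τ) τ := fun τ =>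
    intervalIntegral.integral_hasDerivAt_right (hc.intervalIntegrable 0 τ)
      (hc.stronglyMeasurableAtFilter _ _) hc.continuousAt
  have hEp : ∀ τ, HasDerivAt Ep (Ep τ * (-(1 / 4) * (σp τ - σm τ))) τ := by
    intro τ
    simpa [Ep] using (((hF τ).const_mul (-(1 / 4) : ℝ)).exp)
  have hEm : ∀ τ, HasDerivAt Em (Em τ * ((1 / 4) * (σp τ - σm τ))) τ := by
    intro τ
    simpa [Em] using (((hF τ).const_mul ((1 / 4) : ℝ)).exp)
  have hEppos : ∀ τ, 0 < Ep τ := fun τ => Real.exp_pos _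
  have hEmpos : ∀ τ, 0 < Em τ := fun τ => Real.exp_pos _
  have hNpos : ∀ η ∈ Set.Icc ηm ηp, ∀ τ : ℝ,
      0 < (ηp - η) * Ep τ + (η - ηm) * Em τ := by
    rintro η ⟨h1, h2⟩ τ
    rcases lt_or_eq_of_le h2 with h2' | h2'
    · have : 0 < (ηp - η) * Ep τ := mul_pos (by linarith) (hEppos τ)
      have : 0 ≤ (η - ηm) * Em τ := mul_nonneg (by linarith) (hEmpos τ).le
      nlinarith [mul_pos (show (0:ℝ) < ηp - η by linarith) (hEppos τ)]
    · subst h2'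
      have : 0 < (η - ηm) * Em τ := mul_pos (by linarith) (hEmpos τ)
      simp only [sub_self, zero_mul, zero_add]
      linarith
  refine ⟨?_, ?_, ?_, ?_⟩
  · intro η hηmem τ hτ
    have hden : 0 < (ηp - ηm) * (σp τ - σm τ) :=
      mul_pos (by linarith) (by linarith [hlt τ hτ])
    exact div_pos (pow_pos (hNpos η hηmem τ) 2) hden
  · intro h0 η hηmem
    have hI : (∫ s in (0 : ℝ)..(0 : ℝ), (σp s - σm s)) = 0 := by simp
    have hEp0 : Ep 0 = 1 := by simp [Ep, hI]
    have hEm0 : Em 0 = 1 := by simp [Em, hI]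
    simp only [J, hEp0, hEm0, mul_one]
    rw [h0]
    have hne : (ηp - ηm) ≠ 0 := by linarith
    field_simp
    ring
  · intro η hηmem τ hτ
    have hσpd : HasDerivAt σp (deriv σp τ) τ :=
      (hσp.differentiable (by simp) τ).hasDerivAt
    have hσmd : HasDerivAt σm (deriv σm τ) τ :=
      (hσm.differentiable (by simp) τ).hasDerivAt
    have hNτ : 0 < (ηp - η) * Ep τ + (η - ηm) * Em τ := hNpos η hηmem τ
    have hσlt : σm τ < σp τ := hlt τ hτ
    have hDτ : (ηp - ηm) * (σp τ - σm τ) ≠ 0 :=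
      ne_of_gt (mul_pos (by linarith) (by linarith))
    have hN : HasDerivAt (fun t => (ηp - η) * Ep t + (η - ηm) * Em t)
        ((ηp - η) * (Ep τ * (-(1 / 4) * (σp τ - σm τ)))
          + (η - ηm) * (Em τ * ((1 / 4) * (σp τ - σm τ)))) τ :=
      ((hEp τ).const_mul _).add ((hEm τ).const_mul _)
    have hDen : HasDerivAt (fun t => (ηp - ηm) * (σp t - σm t))
        ((ηp - ηm) * (deriv σp τ - deriv σm τ)) τ :=
      (hσpd.sub hσmd).const_mul _
    have hJd := (hN.pow 2).div hDen hDτ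
    convert hJd using 1
    · rfl
    · rfl
    · rfl
    simp only [Pi.pow_apply]
    push_cast
    have hr : deriv σp τ - deriv σm τ = (σm τ ^ 2 - σp τ ^ 2) / 2 := by
      have := hric τ hτ; linarith
    rw [hr]
    have hNne : (ηp - η) * Ep τ + (η - ηm) * Em τ ≠ 0 := ne_of_gt hNτ
    have h1 : (ηp - ηm) ≠ 0 := by linarith
    have h2 : (σp τ - σm τ) ≠ 0 := by linarith
    simp only [J]
    field_simp
    ring
  · intro τ hτ
    have hσlt : σm τ < σp τ := hlt τ hτ
    have h1 : (ηp - ηm) ≠ 0 := by linarith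
    have h2 : Ep τ ≠ 0 := ne_of_gt (hEppos τ)
    have h3 : Em τ ≠ 0 := ne_of_gt (hEmpos τ)
    constructor
    · simp only [sub_self, zero_mul, add_zero]
      field_simp
    · simp only [sub_self, zero_mul, zero_add]
      field_simp
end

section
/- Let f, g, h be smooth functions of x and M = ∂_x² − 1. Then the cyclic sum (g h′ − h g′)(f‴ − f′) + (h f′ − f h′)(g‴ − g′) + (f g′ − g f′)(h‴ − h′) is an exact x-derivative. -/
/-- The Camassa–Holm analogue (`M = ∂_x² − 1`) of the Jacobi-identity
verification: the cyclic sum of `(g h′ − h g′)(f‴ − f′)` over `(f,g,h)` is an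
exact `x`-derivative. -/
theorem cyclic_sum_exact_derivative_CH
    (f g h : ℝ → ℝ)
    (hf : ContDiff ℝ (⊤ : ℕ∞) f) (hg : ContDiff ℝ (⊤ : ℕ∞) g) (hh : ContDiff ℝ (⊤ : ℕ∞) h) :
    ∃ Φ : ℝ → ℝ, ∀ x : ℝ,
      HasDerivAt Φ
        ((g x * deriv h x - h x * deriv g x)
            * (deriv (deriv (deriv f)) x - deriv f x)
          + (h x * deriv f x - f x * deriv h x)
            * (deriv (deriv (deriv g)) x - deriv g x)
          + (f x * deriv g x - g x * deriv f x)
            * (deriv (deriv (deriv h)) x - deriv h x)) x := by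
  have hf' : ContDiff ℝ (⊤:ℕ∞) f := hf.of_le (by simp)
  have hg' : ContDiff ℝ (⊤:ℕ∞) g := hg.of_le (by simp)
  have hh' : ContDiff ℝ (⊤:ℕ∞) h := hh.of_le (by simp)
  have df := (contDiff_infty_iff_deriv.mp hf').2
  have dg := (contDiff_infty_iff_deriv.mp hg').2
  have dh := (contDiff_infty_iff_deriv.mp hh').2
  have ddf := (contDiff_infty_iff_deriv.mp df).2
  have ddg := (contDiff_infty_iff_deriv.mp dg).2
  have ddh := (contDiff_infty_iff_deriv.mp dh).2
  refine ⟨fun x =>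
      (g x * deriv h x - h x * deriv g x) * deriv (deriv f) x
    + (h x * deriv f x - f x * deriv h x) * deriv (deriv g) x
    + (f x * deriv g x - g x * deriv f x) * deriv (deriv h) x, fun x => ?_⟩
  have Hf : HasDerivAt f (deriv f x) x :=
    (hf.differentiable (by simp) x).hasDerivAt
  have Hg : HasDerivAt g (deriv g x) x :=
    (hg.differentiable (by simp) x).hasDerivAt
  have Hh : HasDerivAt h (deriv h x) x :=
    (hh.differentiable (by simp) x).hasDerivAt
  have Hdf : HasDerivAt (deriv f) (deriv (deriv f) x) x :=
    (df.differentiable (by simp) x).hasDerivAt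
  have Hdg : HasDerivAt (deriv g) (deriv (deriv g) x) x :=
    (dg.differentiable (by simp) x).hasDerivAt
  have Hdh : HasDerivAt (deriv h) (deriv (deriv h) x) x :=
    (dh.differentiable (by simp) x).hasDerivAt
  have Hddf : HasDerivAt (deriv (deriv f)) (deriv (deriv (deriv f)) x) x :=
    (ddf.differentiable (by simp) x).hasDerivAt
  have Hddg : HasDerivAt (deriv (deriv g)) (deriv (deriv (deriv g)) x) x :=
    (ddg.differentiable (by simp) x).hasDerivAt
  have Hddh : HasDerivAt (deriv (deriv h)) (deriv (deriv (deriv h)) x) x :=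
    (ddh.differentiable (by simp) x).hasDerivAt
  have H := ((((Hg.mul Hdh).sub (Hh.mul Hdg)).mul Hddf).add
      (((Hh.mul Hdf).sub (Hf.mul Hdh)).mul Hddg)).add
      ((((Hf.mul Hdg).sub (Hg.mul Hdf)).mul Hddh))
  convert H using 1
  · rfl
  · rfl
  · rfl
  simp only [Pi.sub_apply, Pi.mul_apply]
  ring
end
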